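/- arXiv:2107.07638 — 5 statements merged into one kernel-verified Lean document; each statement's English description precedes it below -/
import Mathlib

section
/- Linearity of Quasi Differential Quotients: let F, G : ℝ^n ⇝ ℝ^m be set-valued maps, x̄ ∈ ℝ^n, ȳ_F, ȳ_G ∈ ℝ^m, Γ_F, Γ_G ⊆ ℝ^n, and α, β ∈ ℝ. If Λ_F is a Quasi Differential Quotient of F at (x̄, ȳ_F) in the direction of Γ_F and Λ_G is a Quasi Differential Quotient of G at (x̄, ȳ_G) in the direction of Γ_G, then the set αΛ_F + βΛ_G := {αL₁ + βL₂ : L₁ ∈ Λ_F, L₂ ∈ Λ_G} is a Quasi Differential Quotient of the set-valued map αF + βG : x ⇝ {αy₁ + βy₂ : y₁ ∈ F(x), y₂ ∈ G(x)} at (x̄, αȳ_F + βȳ_G) in the direction of Γ_F ∩ Γ_G. -/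
open Metric Set Filter Topology

/-- A modulus: a non-decreasing non-negative function `ρ : [0,∞) → [0,∞)`
with `ρ(δ) → 0` as `δ → 0⁺`. -/
def IsModulus (ρ : ℝ → ℝ) : Prop :=
  (∀ δ, 0 ≤ ρ δ) ∧ MonotoneOn ρ (Set.Ici 0) ∧
    Filter.Tendsto ρ (nhdsWithin 0 (Set.Ioi 0)) (nhds 0)

/-- `Λ` is a Quasi Differential Quotient (QDQ) of the set-valued map `Fm` at `(xb, yb)`
in the direction of `Γ`. -/
def IsQDQ {E F : Type*} [NormedAddCommGroup E] [NormedSpace ℝ E]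
    [NormedAddCommGroup F] [NormedSpace ℝ F]
    (Fm : E → Set F) (xb : E) (yb : F) (Γ : Set E) (Λ : Set (E →L[ℝ] F)) : Prop :=
  IsCompact Λ ∧
  ∃ δs : ℝ, 0 < δs ∧ ∃ ρ : ℝ → ℝ, IsModulus ρ ∧
    ∀ δ : ℝ, 0 < δ → δ < δs →
      ∃ (L : E → E →L[ℝ] F) (h : E → F),
        ContinuousOn (fun x => (L x, h x)) (Metric.closedBall xb δ ∩ Γ) ∧
        ∀ x ∈ Metric.closedBall xb δ ∩ Γ,
          Metric.infDist (L x) Λ ≤ ρ δ ∧ ‖h x‖ ≤ δ * ρ δ ∧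
          yb + (L x) (x - xb) + h x ∈ Fm x

/-! Both data of a QDQ combine linearly: the modulus becomes `|α| ρ_F + |β| ρ_G`, the
approximating maps become `α L_F + β L_G` and `α h_F + β h_G`, and all estimates follow from
the triangle inequality. Distances to the compact sets `Λ_F`, `Λ_G` are attained, which gives
the estimate for the distance to `α Λ_F + β Λ_G`. -/

theorem IsModulus.add {ρ σ : ℝ → ℝ} (hρ : IsModulus ρ) (hσ : IsModulus σ) :
    IsModulus (fun δ => ρ δ + σ δ) := by
  refine ⟨fun δ => add_nonneg (hρ.1 δ) (hσ.1 δ), hρ.2.1.add hσ.2.1, ?_⟩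
  simpa using hρ.2.2.add hσ.2.2

theorem IsModulus.const_mul {ρ : ℝ → ℝ} (hρ : IsModulus ρ) {c : ℝ} (hc : 0 ≤ c) :
    IsModulus (fun δ => c * ρ δ) := by
  refine ⟨fun δ => mul_nonneg hc (hρ.1 δ), fun a ha b hb hab => ?_, ?_⟩
  · exact mul_le_mul_of_nonneg_left (hρ.2.1 ha hb hab) hc
  · simpa using hρ.2.2.const_mul c

section LinearCombination

variable {V : Type*} [SeminormedAddCommGroup V] [NormedSpace ℝ V]

theorem norm_smul_add_smul_le (α β : ℝ) (u v : V) :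
    ‖α • u + β • v‖ ≤ |α| * ‖u‖ + |β| * ‖v‖ := by
  calc ‖α • u + β • v‖ ≤ ‖α • u‖ + ‖β • v‖ := norm_add_le _ _
    _ = |α| * ‖u‖ + |β| * ‖v‖ := by simp only [norm_smul, Real.norm_eq_abs]

theorem dist_smul_add_smul_le (α β : ℝ) (u v u' v' : V) :
    dist (α • u + β • v) (α • u' + β • v') ≤ |α| * dist u u' + |β| * dist v v' := by
  rw [dist_eq_norm, dist_eq_norm, dist_eq_norm]
  calc ‖α • u + β • v - (α • u' + β • v')‖ = ‖α • (u - u') + β • (v - v')‖ := by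
        congr 1; module
    _ ≤ |α| * ‖u - u'‖ + |β| * ‖v - v'‖ := norm_smul_add_smul_le α β _ _

theorem IsCompact.smul_add_smul {s t : Set V} (hs : IsCompact s) (ht : IsCompact t)
    (α β : ℝ) :
    IsCompact {w | ∃ a ∈ s, ∃ b ∈ t, w = α • a + β • b} := by
  convert (hs.prod ht).image (f := fun p : V × V => α • p.1 + β • p.2) (by fun_prop) using 1
  ext w
  constructor
  · rintro ⟨a, ha, b, hb, rfl⟩
    exact ⟨(a, b), ⟨ha, hb⟩, rfl⟩
  · rintro ⟨⟨a, b⟩, ⟨ha, hb⟩, rfl⟩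
    exact ⟨a, ha, b, hb, rfl⟩

theorem infDist_smul_add_smul_le {s t : Set V} (hs : IsCompact s) (ht : IsCompact t)
    (α β : ℝ) (u v : V) :
    infDist (α • u + β • v) {w | ∃ a ∈ s, ∃ b ∈ t, w = α • a + β • b} ≤
      |α| * infDist u s + |β| * infDist v t := by
  have rhs_nonneg : 0 ≤ |α| * infDist u s + |β| * infDist v t :=
    add_nonneg (mul_nonneg (abs_nonneg α) infDist_nonneg)
      (mul_nonneg (abs_nonneg β) infDist_nonneg)
  rcases s.eq_empty_or_nonempty with rfl | hs_ne
  · simpa using rhs_nonneg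
  rcases t.eq_empty_or_nonempty with rfl | ht_ne
  · simpa using rhs_nonneg
  obtain ⟨a, ha, hua⟩ := hs.exists_infDist_eq_dist hs_ne u
  obtain ⟨b, hb, hvb⟩ := ht.exists_infDist_eq_dist ht_ne v
  rw [hua, hvb]
  refine (infDist_le_dist_of_mem ?_).trans (dist_smul_add_smul_le α β u v a b)
  exact ⟨a, ha, b, hb, rfl⟩

end LinearCombination

variable {E F : Type*} [NormedAddCommGroup E] [NormedSpace ℝ E]
  [NormedAddCommGroup F] [NormedSpace ℝ F]

/-- The data `(L_δ, h_δ)` required by `IsQDQ` at scale `δ`, with `r` in place of `ρ δ`. -/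
def IsQDQSelection (Fm : E → Set F) (xb : E) (yb : F) (Γ : Set E) (Λ : Set (E →L[ℝ] F))
    (δ r : ℝ) (L : E → E →L[ℝ] F) (h : E → F) : Prop :=
  ContinuousOn (fun x => (L x, h x)) (closedBall xb δ ∩ Γ) ∧
    ∀ x ∈ closedBall xb δ ∩ Γ,
      infDist (L x) Λ ≤ r ∧ ‖h x‖ ≤ δ * r ∧ yb + (L x) (x - xb) + h x ∈ Fm x

theorem IsQDQSelection.smul_add_smul {Fm Gm : E → Set F} {xb : E} {yF yG : F}
    {ΓF ΓG : Set E} {ΛF ΛG : Set (E →L[ℝ] F)} {δ rF rG : ℝ}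
    {LF LG : E → E →L[ℝ] F} {hF hG : E → F}
    (hΛF : IsCompact ΛF) (hΛG : IsCompact ΛG)
    (sF : IsQDQSelection Fm xb yF ΓF ΛF δ rF LF hF)
    (sG : IsQDQSelection Gm xb yG ΓG ΛG δ rG LG hG) (α β : ℝ) :
    IsQDQSelection (fun x => {y | ∃ y₁ ∈ Fm x, ∃ y₂ ∈ Gm x, y = α • y₁ + β • y₂})
      xb (α • yF + β • yG) (ΓF ∩ ΓG) {L | ∃ L₁ ∈ ΛF, ∃ L₂ ∈ ΛG, L = α • L₁ + β • L₂}
      δ (|α| * rF + |β| * rG)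
      (fun x => α • LF x + β • LG x) (fun x => α • hF x + β • hG x) := by
  obtain ⟨contF, boundsF⟩ := sF
  obtain ⟨contG, boundsG⟩ := sG
  have contF' : ContinuousOn _ (closedBall xb δ ∩ (ΓF ∩ ΓG)) :=
    contF.mono (inter_subset_inter_right _ inter_subset_left)
  have contG' : ContinuousOn _ (closedBall xb δ ∩ (ΓF ∩ ΓG)) :=
    contG.mono (inter_subset_inter_right _ inter_subset_right)
  refine ⟨((contF'.fst.const_smul α).add (contG'.fst.const_smul β)).prodMk
    ((contF'.snd.const_smul α).add (contG'.snd.const_smul β)), ?_⟩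
  rintro x ⟨hx, hxF, hxG⟩
  obtain ⟨distF, normF, memF⟩ := boundsF x ⟨hx, hxF⟩
  obtain ⟨distG, normG, memG⟩ := boundsG x ⟨hx, hxG⟩
  refine ⟨?_, ?_, ⟨_, memF, _, memG, ?_⟩⟩
  · calc _ ≤ |α| * infDist (LF x) ΛF + |β| * infDist (LG x) ΛG :=
          infDist_smul_add_smul_le hΛF hΛG α β _ _
      _ ≤ |α| * rF + |β| * rG := by gcongr
  · calc _ ≤ |α| * ‖hF x‖ + |β| * ‖hG x‖ := norm_smul_add_smul_le α β _ _
      _ ≤ |α| * (δ * rF) + |β| * (δ * rG) := by gcongr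
      _ = δ * (|α| * rF + |β| * rG) := by ring
  · simp only [add_apply, FunLike.coe_smul, Pi.smul_apply, smul_add]
    abel

/-- Linearity of Quasi Differential Quotients. -/
theorem qdq_linearity {n m : ℕ}
    (F G : EuclideanSpace ℝ (Fin n) → Set (EuclideanSpace ℝ (Fin m)))
    (xb : EuclideanSpace ℝ (Fin n)) (ybF ybG : EuclideanSpace ℝ (Fin m))
    (ΓF ΓG : Set (EuclideanSpace ℝ (Fin n)))
    (ΛF ΛG : Set (EuclideanSpace ℝ (Fin n) →L[ℝ] EuclideanSpace ℝ (Fin m)))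
    (α β : ℝ)
    (hF : IsQDQ F xb ybF ΓF ΛF) (hG : IsQDQ G xb ybG ΓG ΛG) :
    IsQDQ (fun x => {y | ∃ y₁ ∈ F x, ∃ y₂ ∈ G x, y = α • y₁ + β • y₂})
      xb (α • ybF + β • ybG) (ΓF ∩ ΓG)
      {L | ∃ L₁ ∈ ΛF, ∃ L₂ ∈ ΛG, L = α • L₁ + β • L₂} := by
  obtain ⟨hΛF, δF, hδF, ρF, hρF, selF⟩ := hF
  obtain ⟨hΛG, δG, hδG, ρG, hρG, selG⟩ := hG
  refine ⟨hΛF.smul_add_smul hΛG α β, min δF δG, lt_min hδF hδG,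
    fun δ => |α| * ρF δ + |β| * ρG δ,
    (hρF.const_mul (abs_nonneg α)).add (hρG.const_mul (abs_nonneg β)), ?_⟩
  intro δ hδ hδlt
  obtain ⟨LF, hF, sF⟩ := selF δ hδ (hδlt.trans_le (min_le_left _ _))
  obtain ⟨LG, hG, sG⟩ := selG δ hδ (hδlt.trans_le (min_le_right _ _))
  exact ⟨_, _, IsQDQSelection.smul_add_smul hΛF hΛG sF sG α β⟩
end

section
/- Set product property of Quasi Differential Quotients: let F : ℝ^n ⇝ ℝ^{m₁} and G : ℝ^n ⇝ ℝ^{m₂} be set-valued maps, x̄ ∈ ℝ^n, ȳ_F ∈ ℝ^{m₁}, ȳ_G ∈ ℝ^{m₂}, Γ_F, Γ_G ⊆ ℝ^n. If Λ_F is a Quasi Differential Quotient of F at (x̄, ȳ_F) in the direction of Γ_F and Λ_G is a Quasi Differential Quotient of G at (x̄, ȳ_G) in the direction of Γ_G, then the set Λ_F × Λ_G := {x ↦ (L₁x, L₂x) : L₁ ∈ Λ_F, L₂ ∈ Λ_G} of linear maps from ℝ^n to ℝ^{m₁} × ℝ^{m₂} is a Quasi Differential Quotient of the set-valued map F × G :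 x ⇝ F(x) × G(x) at (x̄, (ȳ_F, ȳ_G)) in the direction of Γ_F ∩ Γ_G. -/
/-!
Take `δ* = min δ₁* δ₂*`, the modulus `max ρ₁ ρ₂`, and the data `(L₁.prod L₂, (h₁, h₂))`.
The product norm is the max of the norms and `(L₁, L₂) ↦ L₁.prod L₂` is an isometry, so
every estimate of the product is the max of the corresponding two estimates.
-/

open Metric Set Filter Topology

theorem IsModulus.max {ρ₁ ρ₂ : ℝ → ℝ} (h₁ : IsModulus ρ₁) (h₂ : IsModulus ρ₂) :
    IsModulus (fun δ => max (ρ₁ δ) (ρ₂ δ)) := by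
  refine ⟨fun δ => (h₁.1 δ).trans (le_max_left _ _), h₁.2.1.sup h₂.2.1, ?_⟩
  simpa using h₁.2.2.max h₂.2.2

theorem Metric.infDist_prod_le {α β : Type*} [PseudoMetricSpace α] [PseudoMetricSpace β]
    (x : α × β) (s : Set α) (t : Set β) :
    infDist x (s ×ˢ t) ≤ max (infDist x.1 s) (infDist x.2 t) := by
  rcases s.eq_empty_or_nonempty with rfl | hs
  · simp
  rcases t.eq_empty_or_nonempty with rfl | ht
  · simp
  rw [infDist, infDist, infDist, infEDist_prod,
    ENNReal.toReal_max (infEDist_ne_top hs) (infEDist_ne_top ht)]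

@[simp]
theorem ContinuousLinearMap.prodₗᵢ_apply {E F₁ F₂ : Type*} [SeminormedAddCommGroup E]
    [NormedSpace ℝ E] [SeminormedAddCommGroup F₁] [NormedSpace ℝ F₁]
    [SeminormedAddCommGroup F₂] [NormedSpace ℝ F₂] (p : (E →L[ℝ] F₁) × (E →L[ℝ] F₂)) :
    prodₗᵢ ℝ p = p.1.prod p.2 :=
  rfl

theorem ContinuousLinearMap.image_prodₗᵢ_prod {E F₁ F₂ : Type*} [SeminormedAddCommGroup E]
    [NormedSpace ℝ E] [SeminormedAddCommGroup F₁] [NormedSpace ℝ F₁]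
    [SeminormedAddCommGroup F₂] [NormedSpace ℝ F₂]
    (Λ₁ : Set (E →L[ℝ] F₁)) (Λ₂ : Set (E →L[ℝ] F₂)) :
    prodₗᵢ ℝ '' (Λ₁ ×ˢ Λ₂) = {L | ∃ L₁ ∈ Λ₁, ∃ L₂ ∈ Λ₂, L = L₁.prod L₂} := by
  ext L
  constructor
  · rintro ⟨⟨L₁, L₂⟩, ⟨h₁, h₂⟩, rfl⟩
    exact ⟨L₁, h₁, L₂, h₂, rfl⟩
  · rintro ⟨L₁, h₁, L₂, h₂, rfl⟩
    exact ⟨(L₁, L₂), ⟨h₁, h₂⟩, rfl⟩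

theorem IsQDQ.prod {E F₁ F₂ : Type*} [NormedAddCommGroup E] [NormedSpace ℝ E]
    [NormedAddCommGroup F₁] [NormedSpace ℝ F₁] [NormedAddCommGroup F₂] [NormedSpace ℝ F₂]
    {Φ₁ : E → Set F₁} {Φ₂ : E → Set F₂} {xb : E} {y₁ : F₁} {y₂ : F₂} {Γ₁ Γ₂ : Set E}
    {Λ₁ : Set (E →L[ℝ] F₁)} {Λ₂ : Set (E →L[ℝ] F₂)}
    (h₁ : IsQDQ Φ₁ xb y₁ Γ₁ Λ₁) (h₂ : IsQDQ Φ₂ xb y₂ Γ₂ Λ₂) :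
    IsQDQ (fun x => Φ₁ x ×ˢ Φ₂ x) xb (y₁, y₂) (Γ₁ ∩ Γ₂)
      {L | ∃ L₁ ∈ Λ₁, ∃ L₂ ∈ Λ₂, L = L₁.prod L₂} := by
  obtain ⟨hΛ₁, δ₁, hδ₁, ρ₁, hρ₁, hA₁⟩ := h₁
  obtain ⟨hΛ₂, δ₂, hδ₂, ρ₂, hρ₂, hA₂⟩ := h₂
  rw [← ContinuousLinearMap.image_prodₗᵢ_prod]
  refine ⟨(hΛ₁.prod hΛ₂).image (ContinuousLinearMap.prodₗᵢ ℝ).continuous, min δ₁ δ₂,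
    lt_min hδ₁ hδ₂, _, hρ₁.max hρ₂, fun δ hδ hδlt => ?_⟩
  obtain ⟨L₁, e₁, hc₁, hx₁⟩ := hA₁ δ hδ (hδlt.trans_le (min_le_left _ _))
  obtain ⟨L₂, e₂, hc₂, hx₂⟩ := hA₂ δ hδ (hδlt.trans_le (min_le_right _ _))
  have hsub₁ : closedBall xb δ ∩ (Γ₁ ∩ Γ₂) ⊆ closedBall xb δ ∩ Γ₁ :=
    inter_subset_inter_right _ inter_subset_left
  have hsub₂ : closedBall xb δ ∩ (Γ₁ ∩ Γ₂) ⊆ closedBall xb δ ∩ Γ₂ :=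
    inter_subset_inter_right _ inter_subset_right
  refine ⟨fun x => (L₁ x).prod (L₂ x), fun x => (e₁ x, e₂ x), ?_, fun x hx => ?_⟩
  · have c₁ := hc₁.mono hsub₁
    have c₂ := hc₂.mono hsub₂
    have c₁₂ := (ContinuousLinearMap.prodₗᵢ ℝ).continuous.comp_continuousOn
      (c₁.fst.prodMk c₂.fst)
    simp only [Function.comp_def, ContinuousLinearMap.prodₗᵢ_apply] at c₁₂
    exact c₁₂.prodMk (c₁.snd.prodMk c₂.snd)
  obtain ⟨hd₁, hn₁, hm₁⟩ := hx₁ x (hsub₁ hx)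
  obtain ⟨hd₂, hn₂, hm₂⟩ := hx₂ x (hsub₂ hx)
  refine ⟨?_, ?_, hm₁, hm₂⟩
  · calc infDist ((L₁ x).prod (L₂ x)) (ContinuousLinearMap.prodₗᵢ ℝ '' Λ₁ ×ˢ Λ₂)
        = infDist (L₁ x, L₂ x) (Λ₁ ×ˢ Λ₂) := by
          rw [← infDist_image (ContinuousLinearMap.prodₗᵢ ℝ).isometry,
            ContinuousLinearMap.prodₗᵢ_apply]
      _ ≤ max (infDist (L₁ x) Λ₁) (infDist (L₂ x) Λ₂) := infDist_prod_le _ _ _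
      _ ≤ max (ρ₁ δ) (ρ₂ δ) := max_le_max hd₁ hd₂
  · calc ‖(e₁ x, e₂ x)‖ = max ‖e₁ x‖ ‖e₂ x‖ := rfl
      _ ≤ max (δ * ρ₁ δ) (δ * ρ₂ δ) := max_le_max hn₁ hn₂
      _ = δ * max (ρ₁ δ) (ρ₂ δ) := (mul_max_of_nonneg _ _ hδ.le).symm

/-- Set product property of Quasi Differential Quotients. -/
theorem qdq_set_product {n m₁ m₂ : ℕ}
    (F : EuclideanSpace ℝ (Fin n) → Set (EuclideanSpace ℝ (Fin m₁)))
    (G : EuclideanSpace ℝ (Fin n) → Set (EuclideanSpace ℝ (Fin m₂)))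
    (xb : EuclideanSpace ℝ (Fin n))
    (ybF : EuclideanSpace ℝ (Fin m₁)) (ybG : EuclideanSpace ℝ (Fin m₂))
    (ΓF ΓG : Set (EuclideanSpace ℝ (Fin n)))
    (ΛF : Set (EuclideanSpace ℝ (Fin n) →L[ℝ] EuclideanSpace ℝ (Fin m₁)))
    (ΛG : Set (EuclideanSpace ℝ (Fin n) →L[ℝ] EuclideanSpace ℝ (Fin m₂)))
    (hF : IsQDQ F xb ybF ΓF ΛF) (hG : IsQDQ G xb ybG ΓG ΛG) :
    IsQDQ (fun x => (F x) ×ˢ (G x)) xb (ybF, ybG) (ΓF ∩ ΓG)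
      {L | ∃ L₁ ∈ ΛF, ∃ L₂ ∈ ΛG, L = L₁.prod L₂} :=
  hF.prod hG
end

section
/- Characterization of transversality of convex cones: let E be a finite-dimensional real vector space and K₁, K₂ ⊆ E convex cones. Then K₁ and K₂ are transversal (i.e. K₁ − K₂ = E) if and only if either they are strongly transversal (i.e. transversal and K₁ ∩ K₂ ⊋ {0}) or they are complementary linear subspaces of E (i.e. K₁ and K₂ are linear subspaces with K₁ + K₂ = E and K₁ ∩ K₂ = {0}). -/
/-!
If `K₁ - K₂ = E` and `K₁ ∩ K₂ = {0}`, each cone is closed under negation: writing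
`-x = k₁ - k₂` with `x ∈ K₁` puts `k₂ = k₁ + x` in `K₁ ∩ K₂`, so `k₂ = 0` and `-x = k₁ ∈ K₁`
(and symmetrically for `K₂`, since `K₂ - K₁ = -(K₁ - K₂) = E`). A convex cone closed under
negation is a linear subspace, and for a subspace `K₂` we have `K₁ - K₂ = K₁ + K₂`.
-/

/-- A convex cone: a convex set closed under multiplication by nonnegative scalars. -/
def IsConvexCone {E : Type*} [AddCommGroup E] [Module ℝ E] (K : Set E) : Prop :=
  Convex ℝ K ∧ ∀ a : ℝ, 0 ≤ a → ∀ k ∈ K, a • k ∈ K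

open Set Pointwise

namespace IsConvexCone

variable {E : Type*} [AddCommGroup E] [Module ℝ E] {K K₁ K₂ : Set E}

theorem add_mem (h : IsConvexCone K) {x y : E} (hx : x ∈ K) (hy : y ∈ K) : x + y ∈ K := by
  have hmid : (1 / 2 : ℝ) • x + (1 / 2 : ℝ) • y ∈ K :=
    h.1 hx hy (by norm_num) (by norm_num) (by norm_num)
  have hdouble := h.2 2 zero_le_two _ hmid
  rwa [smul_add, smul_smul, smul_smul, mul_one_div_cancel two_ne_zero, one_smul, one_smul]
    at hdouble

theorem zero_mem (h : IsConvexCone K) (hK : K.Nonempty) : (0 : E) ∈ K := by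
  obtain ⟨k, hk⟩ := hK
  simpa using h.2 0 le_rfl k hk

theorem smul_mem_of_neg_mem (h : IsConvexCone K) (hneg : ∀ x ∈ K, -x ∈ K) (c : ℝ) {x : E}
    (hx : x ∈ K) : c • x ∈ K := by
  rcases le_or_gt 0 c with hc | hc
  · exact h.2 c hc x hx
  · rw [← neg_smul_neg]
    exact h.2 (-c) (neg_nonneg.2 hc.le) _ (hneg x hx)

theorem exists_submodule_of_neg_mem (h : IsConvexCone K) (hK : K.Nonempty)
    (hneg : ∀ x ∈ K, -x ∈ K) : ∃ S : Submodule ℝ E, (S : Set E) = K :=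
  ⟨{ carrier := K
     add_mem' := h.add_mem
     zero_mem' := h.zero_mem hK
     smul_mem' := fun c _ hx => h.smul_mem_of_neg_mem hneg c hx }, rfl⟩

theorem neg_mem_of_sub_eq_univ (h₁ : IsConvexCone K₁) (hsub : K₁ - K₂ = univ)
    (hinter : K₁ ∩ K₂ ⊆ {0}) {x : E} (hx : x ∈ K₁) : -x ∈ K₁ := by
  obtain ⟨k₁, hk₁, k₂, hk₂, hdiff⟩ := Set.mem_sub.1 (hsub ▸ mem_univ (-x))
  have hk₂_eq : k₂ = k₁ + x := by rw [← neg_neg x, ← hdiff]; abel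
  have hk₂_zero : k₂ = 0 := hinter ⟨hk₂_eq ▸ h₁.add_mem hk₁ hx, hk₂⟩
  rwa [← hdiff, hk₂_zero, sub_zero]

theorem exists_submodule_of_sub_eq_univ (h₁ : IsConvexCone K₁) (hsub : K₁ - K₂ = univ)
    (hinter : K₁ ∩ K₂ ⊆ {0}) : ∃ S : Submodule ℝ E, (S : Set E) = K₁ :=
  h₁.exists_submodule_of_neg_mem (hsub ▸ univ_nonempty).of_sub_left
    fun _ => h₁.neg_mem_of_sub_eq_univ hsub hinter

end IsConvexCone

theorem Set.sub_submodule_eq_add {E : Type*} [AddCommGroup E] [Module ℝ E] (K : Set E)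
    (S : Submodule ℝ E) : K - (S : Set E) = K + S := by
  rw [sub_eq_add_neg, Submodule.neg_coe]

theorem transversal_iff_strongly_transversal_or_complementary_general
    {E : Type*} [AddCommGroup E] [Module ℝ E]
    (K₁ K₂ : Set E) (h₁ : IsConvexCone K₁) (h₂ : IsConvexCone K₂) :
    {x | ∃ k₁ ∈ K₁, ∃ k₂ ∈ K₂, x = k₁ - k₂} = Set.univ ↔
      (({x | ∃ k₁ ∈ K₁, ∃ k₂ ∈ K₂, x = k₁ - k₂} = Set.univ ∧ ∃ v ∈ K₁ ∩ K₂, v ≠ 0) ∨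
        ((∃ S₁ : Submodule ℝ E, (S₁ : Set E) = K₁) ∧
         (∃ S₂ : Submodule ℝ E, (S₂ : Set E) = K₂) ∧
         {x | ∃ k₁ ∈ K₁, ∃ k₂ ∈ K₂, x = k₁ + k₂} = Set.univ ∧
         K₁ ∩ K₂ = {0})) := by
  have hsub : {x | ∃ k₁ ∈ K₁, ∃ k₂ ∈ K₂, x = k₁ - k₂} = K₁ - K₂ := by
    ext; simp only [mem_ofPred_eq, Set.mem_sub, eq_comm]
  have hadd : {x | ∃ k₁ ∈ K₁, ∃ k₂ ∈ K₂, x = k₁ + k₂} = K₁ + K₂ := by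
    ext; simp only [mem_ofPred_eq, Set.mem_add, eq_comm]
  rw [hsub, hadd]
  constructor
  · intro htr
    by_cases hv : ∃ v ∈ K₁ ∩ K₂, v ≠ 0
    · exact Or.inl ⟨htr, hv⟩
    have hinter : K₁ ∩ K₂ ⊆ {0} := fun v hv' => not_not.1 fun hne => hv ⟨v, hv', hne⟩
    have htr' : K₂ - K₁ = univ := by rw [← neg_sub, htr, neg_univ]
    obtain ⟨S₂, rfl⟩ := h₂.exists_submodule_of_sub_eq_univ htr' (inter_comm K₁ K₂ ▸ hinter)
    refine Or.inr ⟨h₁.exists_submodule_of_sub_eq_univ htr hinter, ⟨S₂, rfl⟩,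
      K₁.sub_submodule_eq_add S₂ ▸ htr, ?_⟩
    have hK₁ : K₁.Nonempty := (htr ▸ univ_nonempty).of_sub_left
    exact hinter.antisymm (singleton_subset_iff.2 ⟨h₁.zero_mem hK₁, S₂.zero_mem⟩)
  · rintro (⟨htr, -⟩ | ⟨-, ⟨S₂, rfl⟩, hsum, -⟩)
    · exact htr
    · rwa [Set.sub_submodule_eq_add]

/-- Two convex cones are transversal iff they are strongly transversal
or complementary linear subspaces. -/
theorem transversal_iff_strongly_transversal_or_complementary
    {E : Type*} [AddCommGroup E] [Module ℝ E] [FiniteDimensional ℝ E]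
    (K₁ K₂ : Set E) (h₁ : IsConvexCone K₁) (h₂ : IsConvexCone K₂) :
    {x | ∃ k₁ ∈ K₁, ∃ k₂ ∈ K₂, x = k₁ - k₂} = Set.univ ↔
      (({x | ∃ k₁ ∈ K₁, ∃ k₂ ∈ K₂, x = k₁ - k₂} = Set.univ ∧ ∃ v ∈ K₁ ∩ K₂, v ≠ 0) ∨
        ((∃ S₁ : Submodule ℝ E, (S₁ : Set E) = K₁) ∧
         (∃ S₂ : Submodule ℝ E, (S₂ : Set E) = K₂) ∧
         {x | ∃ k₁ ∈ K₁, ∃ k₂ ∈ K₂, x = k₁ + k₂} = Set.univ ∧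
         K₁ ∩ K₂ = {0})) :=
  transversal_iff_strongly_transversal_or_complementary_general K₁ K₂ h₁ h₂
end

section
/- δ-independent sufficient condition for QDQ: let F : ℝ^n ⇝ ℝ^m be a set-valued map, (x̄, ȳ) ∈ ℝ^n × ℝ^m, Γ ⊆ ℝ^n, and Λ a compact set of linear maps from ℝ^n to ℝ^m. Suppose there exists a (δ-independent) continuous map (L, h) : Γ → Lin(ℝ^n, ℝ^m) × ℝ^m such that sup_{x ∈ (x̄+B_δ)∩Γ} dist(L(x), Λ) → 0 as δ → 0, sup_{x ∈ (x̄+B_δ)∩Γ} ‖h(x)‖ = o(δ) as δ → 0, and ȳ + L(x)(x − x̄) + h(x) ∈ F(x) for all x ∈ Γ. Then Λ is a Quasi Differential Quotient of F at (x̄, ȳ) in the direction of Γ. -/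
open Metric Set Filter Topology

/- The map `(L, h)` itself serves as the witness at every scale `δ`; all that is needed is a single
modulus `ρ` bounding, at scale `δ`, both `dist (L x) Λ` and `‖h x‖ / δ` on `B(x̄, δ) ∩ Γ`. Such a
modulus is the smallest bound valid at all scales `≤ δ`, which is monotone by construction. -/

/-- Inserting `1` keeps `sInf` away from the junk value `sInf ∅ = 0`. -/
noncomputable def modulusOf (D : ℝ → Set ℝ) (δ : ℝ) : ℝ :=
  sInf (insert 1 {ε | 0 ≤ ε ∧ ∀ δ' ∈ Ioc 0 δ, ∀ v ∈ D δ', v ≤ ε})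

section modulusOf

variable {D : ℝ → Set ℝ}

lemma bddBelow_modulusOf_set (δ : ℝ) :
    BddBelow (insert 1 {ε | 0 ≤ ε ∧ ∀ δ' ∈ Ioc 0 δ, ∀ v ∈ D δ', v ≤ ε}) :=
  ⟨0, by rintro ε (rfl | hε); exacts [zero_le_one, hε.1]⟩

lemma modulusOf_nonneg (δ : ℝ) : 0 ≤ modulusOf D δ :=
  le_csInf (insert_nonempty _ _) <| by
    rintro ε (rfl | hε)
    exacts [zero_le_one, hε.1]

lemma modulusOf_le {δ ε : ℝ} (hε : 0 ≤ ε) (hD : ∀ δ' ∈ Ioc 0 δ, ∀ v ∈ D δ', v ≤ ε) :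
    modulusOf D δ ≤ ε :=
  csInf_le (bddBelow_modulusOf_set δ) (mem_insert_of_mem _ ⟨hε, hD⟩)

lemma monotone_modulusOf : Monotone (modulusOf D) := by
  intro a b hab
  refine csInf_le_csInf (bddBelow_modulusOf_set a) (insert_nonempty _ _) ?_
  rintro ε (rfl | ⟨hε, hεb⟩)
  · exact mem_insert _ _
  · exact mem_insert_of_mem _ ⟨hε, fun δ' hδ' => hεb δ' ⟨hδ'.1, hδ'.2.trans hab⟩⟩

lemma le_modulusOf {δ : ℝ} (hδ : 0 < δ) (hD : ∀ v ∈ D δ, v ≤ 1) {v : ℝ} (hv : v ∈ D δ) :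
    v ≤ modulusOf D δ :=
  le_csInf (insert_nonempty _ _) <| by
    rintro ε (rfl | hε)
    exacts [hD v hv, hε.2 δ ⟨hδ, le_rfl⟩ v hv]

lemma tendsto_modulusOf (hD : ∀ ε > 0, ∃ δ₀ > 0, ∀ δ ∈ Ioc 0 δ₀, ∀ v ∈ D δ, v ≤ ε) :
    Tendsto (modulusOf D) (𝓝[>] 0) (𝓝 0) := by
  refine tendsto_order.2 ⟨fun a ha => Eventually.of_forall fun δ => ha.trans_le
    (modulusOf_nonneg δ), fun ε hε => ?_⟩
  obtain ⟨δ₀, hδ₀, hδ₀D⟩ := hD (ε / 2) (half_pos hε)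
  filter_upwards [Ioo_mem_nhdsGT hδ₀] with δ hδ
  exact (modulusOf_le (half_pos hε).le fun δ' hδ' =>
    hδ₀D δ' ⟨hδ'.1, hδ'.2.trans hδ.2.le⟩).trans_lt (half_lt_self hε)

lemma isModulus_modulusOf (hD : ∀ ε > 0, ∃ δ₀ > 0, ∀ δ ∈ Ioc 0 δ₀, ∀ v ∈ D δ, v ≤ ε) :
    IsModulus (modulusOf D) :=
  ⟨modulusOf_nonneg, monotone_modulusOf.monotoneOn _, tendsto_modulusOf hD⟩

end modulusOf

/-- δ-independent sufficient condition for being a QDQ. -/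
theorem qdq_of_delta_independent {n m : ℕ}
    (F : EuclideanSpace ℝ (Fin n) → Set (EuclideanSpace ℝ (Fin m)))
    (xb : EuclideanSpace ℝ (Fin n)) (yb : EuclideanSpace ℝ (Fin m))
    (Γ : Set (EuclideanSpace ℝ (Fin n)))
    (Λ : Set (EuclideanSpace ℝ (Fin n) →L[ℝ] EuclideanSpace ℝ (Fin m)))
    (hΛ : IsCompact Λ)
    (L : EuclideanSpace ℝ (Fin n) → (EuclideanSpace ℝ (Fin n) →L[ℝ] EuclideanSpace ℝ (Fin m)))
    (h : EuclideanSpace ℝ (Fin n) → EuclideanSpace ℝ (Fin m))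
    (hcont : ContinuousOn (fun x => (L x, h x)) Γ)
    (hLdist : ∀ ε > (0:ℝ), ∃ δ₀ > (0:ℝ),
      ∀ x ∈ Metric.closedBall xb δ₀ ∩ Γ, Metric.infDist (L x) Λ ≤ ε)
    (hho : ∀ ε > (0:ℝ), ∃ δ₀ > (0:ℝ), ∀ δ : ℝ, 0 < δ → δ ≤ δ₀ →
      ∀ x ∈ Metric.closedBall xb δ ∩ Γ, ‖h x‖ ≤ ε * δ)
    (hmem : ∀ x ∈ Γ, yb + (L x) (x - xb) + h x ∈ F x) :
    IsQDQ F xb yb Γ Λ := by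
  set D : ℝ → Set ℝ := fun δ => (fun x => infDist (L x) Λ) '' (closedBall xb δ ∩ Γ) ∪
    (fun x => ‖h x‖ / δ) '' (closedBall xb δ ∩ Γ)
  have hD : ∀ ε > 0, ∃ δ₀ > 0, ∀ δ ∈ Ioc 0 δ₀, ∀ v ∈ D δ, v ≤ ε := by
    intro ε hε
    obtain ⟨δ₁, hδ₁, hL⟩ := hLdist ε hε
    obtain ⟨δ₂, hδ₂, hh⟩ := hho ε hε
    refine ⟨min δ₁ δ₂, lt_min hδ₁ hδ₂, ?_⟩
    rintro δ ⟨hδ, hδmin⟩ v (⟨x, hx, rfl⟩ | ⟨x, hx, rfl⟩)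
    · exact hL x ⟨closedBall_subset_closedBall (hδmin.trans (min_le_left _ _)) hx.1, hx.2⟩
    · exact div_le_of_le_mul₀ hδ.le hε.le (hh δ hδ (hδmin.trans (min_le_right _ _)) x hx)
  obtain ⟨δs, hδs, hδsD⟩ := hD 1 one_pos
  refine ⟨hΛ, δs, hδs, modulusOf D, isModulus_modulusOf hD, fun δ hδ hδδs =>
    ⟨L, h, hcont.mono inter_subset_right, fun x hx => ?_⟩⟩
  have hρ : ∀ v ∈ D δ, v ≤ modulusOf D δ := fun _ => le_modulusOf hδ (hδsD δ ⟨hδ, hδδs.le⟩)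
  exact ⟨hρ _ (Or.inl ⟨x, hx, rfl⟩), (div_le_iff₀' hδ).1 (hρ _ (Or.inr ⟨x, hx, rfl⟩)),
    hmem x hx.2⟩
end

section
/- QDQs and F-abundant sets: let F : ℝ^n → E ⊆ ℝ^m be a single-valued map, x̄ ∈ ℝ^n, Γ ⊆ ℝ^n, and let Λ be a Quasi Differential Quotient of F (regarded as the set-valued map x ⇝ {F(x)}) at (x̄, F(x̄)) in the direction of Γ. Suppose 𝔈 ⊆ E is F-abundant, i.e. for every η > 0 there exists a continuous map θ_η : ℝ^m → 𝔈 such that ‖F(x) − θ_η(F(x))‖ < η for all x ∈ ℝ^n. Then Λ is a Quasi Differential Quotient of the set-valued map F̃ : ℝ^n ⇝ ℝ^m defined by F̃(x) := ⋃_{η>0} {θ_η(F(x))} at (x̄, F(x̄)) in the direction of Γ. -/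
/-! On `(x̄ + B_δ) ∩ Γ` the approximating point `F x̄ + L_δ(x)(x - x̄) + h_δ(x)` equals `F x`, so
replacing it by its continuous image under `θ_{δ²}` moves it by less than `δ² = δ·|δ|`. This shift
is absorbed into the remainder `h_δ`, at the cost of enlarging the modulus from `ρ` to `ρ + |·|`. -/

open Metric Set Filter Topology

theorem isModulus_abs : IsModulus (fun δ => |δ|) :=
  ⟨abs_nonneg, fun _ ha _ hb hab => by
    simpa only [abs_of_nonneg (mem_Ici.mp ha), abs_of_nonneg (mem_Ici.mp hb)] using hab,
    by simpa using (continuous_abs.tendsto (0 : ℝ)).mono_left nhdsWithin_le_nhds⟩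

theorem IsQDQ.of_continuous_perturbation {E F : Type*} [NormedAddCommGroup E] [NormedSpace ℝ E]
    [NormedAddCommGroup F] [NormedSpace ℝ F] {Fm G : E → Set F} {xb : E} {yb : F} {Γ : Set E}
    {Λ : Set (E →L[ℝ] F)} (hq : IsQDQ Fm xb yb Γ Λ) {σ : ℝ → ℝ} (hσ : IsModulus σ)
    (φ : ℝ → F → F) (hφc : ∀ δ, 0 < δ → Continuous (φ δ))
    (hφ : ∀ δ, 0 < δ → ∀ x, ∀ y ∈ Fm x, φ δ y ∈ G x ∧ ‖φ δ y - y‖ ≤ δ * σ δ) :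
    IsQDQ G xb yb Γ Λ := by
  obtain ⟨hΛ, δs, hδs, ρ, hρ, happrox⟩ := hq
  refine ⟨hΛ, δs, hδs, fun δ => ρ δ + σ δ, hρ.add hσ, fun δ hδ hδδs => ?_⟩
  obtain ⟨L, h, hcont, hLh⟩ := happrox δ hδ hδδs
  set p : E → F := fun x => yb + L x (x - xb) + h x with hp
  have hpcont : ContinuousOn p (closedBall xb δ ∩ Γ) :=
    (continuousOn_const.add ((continuous_fst.comp_continuousOn hcont).clm_apply
      (continuous_sub_right xb).continuousOn)).add (continuous_snd.comp_continuousOn hcont)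
  refine ⟨L, fun x => φ δ (p x) - p x + h x,
    (continuous_fst.comp_continuousOn hcont).prodMk
      ((((hφc δ hδ).comp_continuousOn hpcont).sub hpcont).add
        (continuous_snd.comp_continuousOn hcont)),
    fun x hx => ?_⟩
  obtain ⟨hdist, hh, hpx⟩ := hLh x hx
  obtain ⟨hφG, hφnorm⟩ := hφ δ hδ x (p x) hpx
  refine ⟨hdist.trans (le_add_of_nonneg_right (hσ.1 δ)), ?_, ?_⟩
  · calc ‖φ δ (p x) - p x + h x‖ ≤ ‖φ δ (p x) - p x‖ + ‖h x‖ := norm_add_le _ _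
      _ ≤ δ * σ δ + δ * ρ δ := add_le_add hφnorm hh
      _ = δ * (ρ δ + σ δ) := by ring
  · convert hφG using 1
    simp only [hp]
    abel

theorem qdq_abundant_general {n m : ℕ}
    (𝔈 : Set (EuclideanSpace ℝ (Fin m)))
    (F : EuclideanSpace ℝ (Fin n) → EuclideanSpace ℝ (Fin m))
    (xb : EuclideanSpace ℝ (Fin n)) (Γ : Set (EuclideanSpace ℝ (Fin n)))
    (Λ : Set (EuclideanSpace ℝ (Fin n) →L[ℝ] EuclideanSpace ℝ (Fin m)))
    (hΛ : IsQDQ (fun x => {F x}) xb (F xb) Γ Λ)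
    (θ : ℝ → EuclideanSpace ℝ (Fin m) → EuclideanSpace ℝ (Fin m))
    (hθ : ∀ η : ℝ, 0 < η → Continuous (θ η) ∧ (∀ y, θ η y ∈ 𝔈) ∧
      ∀ x, ‖F x - θ η (F x)‖ < η) :
    IsQDQ (fun x => {y | ∃ η : ℝ, 0 < η ∧ y = θ η (F x)}) xb (F xb) Γ Λ := by
  refine hΛ.of_continuous_perturbation isModulus_abs (fun δ => θ (δ ^ 2))
    (fun δ hδ => (hθ _ (pow_pos hδ 2)).1) ?_
  rintro δ hδ x y rfl
  refine ⟨⟨δ ^ 2, pow_pos hδ 2, rfl⟩, ?_⟩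
  calc ‖θ (δ ^ 2) (F x) - F x‖ = ‖F x - θ (δ ^ 2) (F x)‖ := norm_sub_rev _ _
    _ ≤ δ ^ 2 := ((hθ _ (pow_pos hδ 2)).2.2 x).le
    _ = δ * |δ| := by rw [abs_of_pos hδ, sq]

/-- QDQs and `F`-abundant sets: a QDQ of `F` is also a QDQ of the set-valued map
obtained by composing `F` with a family of continuous maps into an `F`-abundant set. -/
theorem qdq_abundant {n m : ℕ}
    (E 𝔈 : Set (EuclideanSpace ℝ (Fin m))) (h𝔈E : 𝔈 ⊆ E)
    (F : EuclideanSpace ℝ (Fin n) → EuclideanSpace ℝ (Fin m))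
    (hFE : ∀ x, F x ∈ E)
    (xb : EuclideanSpace ℝ (Fin n)) (Γ : Set (EuclideanSpace ℝ (Fin n)))
    (Λ : Set (EuclideanSpace ℝ (Fin n) →L[ℝ] EuclideanSpace ℝ (Fin m)))
    (hΛ : IsQDQ (fun x => {F x}) xb (F xb) Γ Λ)
    (θ : ℝ → EuclideanSpace ℝ (Fin m) → EuclideanSpace ℝ (Fin m))
    (hθ : ∀ η : ℝ, 0 < η → Continuous (θ η) ∧ (∀ y, θ η y ∈ 𝔈) ∧
      ∀ x, ‖F x - θ η (F x)‖ < η) :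
    IsQDQ (fun x => {y | ∃ η : ℝ, 0 < η ∧ y = θ η (F x)}) xb (F xb) Γ Λ :=
  qdq_abundant_general 𝔈 F xb Γ Λ hΛ θ hθ
end
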